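/- Let φ : A → B be a chain homotopy equivalence of nonnegatively graded chain complexes of R-modules with A_n = B_n = 0 for n ≥ 3. Let F be an R-module and ι : F → A₂ an R-linear map with ∂₂ ∘ ι = 0. Define extended complexes A' (with A'₃ = F, differential ι) and B' (with B'₃ = F, differential φ₂ ∘ ι). Then A' and B' are chain homotopy equivalent. -/
import Mathlib


/-- Let `φ : A → B` be a chain homotopy equivalence of complexes concentrated in degrees
0,1,2, and `ι : F → A₂` with `∂₂ ∘ ι = 0`.  Then the extended complexes
`A' : F →ι A₂ → A₁ → A₀` and `B' : F →(φ₂∘ι) B₂ → B₁ → B₀` are chain homotopy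
equivalent. -/
theorem extended_complexes_homotopy_equivalent (R : Type) [Ring R] (F A₂ A₁ A₀ B₂ B₁ B₀ : Type)
    [AddCommGroup F] [Module R F]
    [AddCommGroup A₂] [Module R A₂] [AddCommGroup A₁] [Module R A₁]
    [AddCommGroup A₀] [Module R A₀] [AddCommGroup B₂] [Module R B₂]
    [AddCommGroup B₁] [Module R B₁] [AddCommGroup B₀] [Module R B₀]
    (dA₂ : A₂ →ₗ[R] A₁) (dA₁ : A₁ →ₗ[R] A₀) (dB₂ : B₂ →ₗ[R] B₁) (dB₁ : B₁ →ₗ[R] B₀)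
    (φ₂ : A₂ →ₗ[R] B₂) (φ₁ : A₁ →ₗ[R] B₁) (φ₀ : A₀ →ₗ[R] B₀)
    (hA : dA₁.comp dA₂ = 0) (hB : dB₁.comp dB₂ = 0)
    (hcomm₂ : dB₂.comp φ₂ = φ₁.comp dA₂) (hcomm₁ : dB₁.comp φ₁ = φ₀.comp dA₁)
    (hhe : ∃ (ψ₂ : B₂ →ₗ[R] A₂) (ψ₁ : B₁ →ₗ[R] A₁) (ψ₀ : B₀ →ₗ[R] A₀)
        (t₁ : A₁ →ₗ[R] A₂) (t₀ : A₀ →ₗ[R] A₁) (u₁ : B₁ →ₗ[R] B₂) (u₀ : B₀ →ₗ[R] B₁),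
        dA₂.comp ψ₂ = ψ₁.comp dB₂ ∧ dA₁.comp ψ₁ = ψ₀.comp dB₁ ∧
        LinearMap.id - (ψ₂.comp φ₂) = t₁.comp dA₂ ∧
        LinearMap.id - (ψ₁.comp φ₁) = dA₂.comp t₁ + t₀.comp dA₁ ∧
        LinearMap.id - (ψ₀.comp φ₀) = dA₁.comp t₀ ∧
        LinearMap.id - (φ₂.comp ψ₂) = u₁.comp dB₂ ∧
        LinearMap.id - (φ₁.comp ψ₁) = dB₂.comp u₁ + u₀.comp dB₁ ∧
        LinearMap.id - (φ₀.comp ψ₀) = dB₁.comp u₀)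
    (ι : F →ₗ[R] A₂) (hι : dA₂.comp ι = 0) :
    -- a chain homotopy equivalence between
    -- `A' : F →ι A₂ →dA₂ A₁ →dA₁ A₀` and `B' : F →(φ₂∘ι) B₂ →dB₂ B₁ →dB₁ B₀`
    ∃ (f₃ : F →ₗ[R] F) (f₂ : A₂ →ₗ[R] B₂) (f₁ : A₁ →ₗ[R] B₁) (f₀ : A₀ →ₗ[R] B₀)
      (g₃ : F →ₗ[R] F) (g₂ : B₂ →ₗ[R] A₂) (g₁ : B₁ →ₗ[R] A₁) (g₀ : B₀ →ₗ[R] A₀)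
      (s₂ : A₂ →ₗ[R] F) (s₁ : A₁ →ₗ[R] A₂) (s₀ : A₀ →ₗ[R] A₁)
      (u₂ : B₂ →ₗ[R] F) (u₁ : B₁ →ₗ[R] B₂) (u₀ : B₀ →ₗ[R] B₁),
      -- `f` is a chain map `A' → B'`
      (φ₂.comp ι).comp f₃ = f₂.comp ι ∧ dB₂.comp f₂ = f₁.comp dA₂ ∧
        dB₁.comp f₁ = f₀.comp dA₁ ∧
      -- `g` is a chain map `B' → A'`
      ι.comp g₃ = g₂.comp (φ₂.comp ι) ∧ dA₂.comp g₂ = g₁.comp dB₂ ∧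
        dA₁.comp g₁ = g₀.comp dB₁ ∧
      -- chain homotopy `g ∘ f ≃ id` on `A'`
      LinearMap.id - (g₃.comp f₃) = s₂.comp ι ∧
      LinearMap.id - (g₂.comp f₂) = ι.comp s₂ + s₁.comp dA₂ ∧
      LinearMap.id - (g₁.comp f₁) = dA₂.comp s₁ + s₀.comp dA₁ ∧
      LinearMap.id - (g₀.comp f₀) = dA₁.comp s₀ ∧
      -- chain homotopy `f ∘ g ≃ id` on `B'`
      LinearMap.id - (f₃.comp g₃) = u₂.comp (φ₂.comp ι) ∧
      LinearMap.id - (f₂.comp g₂) = (φ₂.comp ι).comp u₂ + u₁.comp dB₂ ∧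
      LinearMap.id - (f₁.comp g₁) = dB₂.comp u₁ + u₀.comp dB₁ ∧
      LinearMap.id - (f₀.comp g₀) = dB₁.comp u₀ := by
  obtain ⟨ψ₂, ψ₁, ψ₀, t₁, t₀, v₁, v₀, h1, h2, h3, h4, h5, h6, h7, h8⟩ := hhe
  have key : ψ₂.comp (φ₂.comp ι) = ι := by
    have := congrArg (fun m => m.comp ι) h3
    simp only [LinearMap.sub_comp, LinearMap.id_comp, LinearMap.comp_assoc, hι,
      LinearMap.comp_zero, sub_eq_zero] at this
    exact this.symm
  refine ⟨LinearMap.id, φ₂, φ₁, φ₀, LinearMap.id, ψ₂, ψ₁, ψ₀, 0, t₁, t₀, 0, v₁, v₀,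
    ?_, hcomm₂, hcomm₁, ?_, h1, h2, ?_, ?_, h4, h5, ?_, ?_, h7, h8⟩
  · simp [LinearMap.comp_assoc]
  · exact key.symm
  · simp
  · rw [h3]; simp
  · simp
  · rw [h6]; simp
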